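/- Let (Ω, 𝔽, P) be a probability space, let g : Ω → ℝ^d be a random vector such that each component g(i) and g(i)² is integrable, and let w, w* ∈ ℝ^d be fixed. Assume E[g(i)²] > 0 for every i. Then the expected squared distance E‖(w − D·g) − w*‖², viewed as a function of a deterministic diagonal matrix D, is minimized exactly when the i-th diagonal entry equals α(i) = E[g(i)·(w(i) − w*(i))] / E[g(i)²] for every i = 1, …, d. -/

import Mathlib

/-!
Coordinatewise, the loss is `∑ i, E[(c i - t i * g i)²]` with `c = w - w*`, a sum of independent
quadratics `c i² - 2 t i c i E[g i] + t i² E[g i²]`. Completing the square, the loss at `β` exceeds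
the loss at `α` by `∑ i, E[g i²] (β i - α i)²`, which is nonnegative and vanishes only at `β = α`.
-/

open Matrix MeasureTheory

/-- The Euclidean norm of a vector in `ℝ^d`. -/
noncomputable def enormEuclid {d : ℕ} (v : Fin d → ℝ) : ℝ :=
  ‖(EuclideanSpace.equiv (Fin d) ℝ).symm v‖

open Finset

lemma enormEuclid_sq {d : ℕ} (v : Fin d → ℝ) : enormEuclid v ^ 2 = ∑ i, v i ^ 2 := by
  rw [enormEuclid, EuclideanSpace.norm_eq, Real.sq_sqrt (by positivity)]
  simp [sq_abs]

lemma sum_mul_sq_eq_zero_iff {ι : Type*} [Fintype ι] {s x : ι → ℝ} (hs : ∀ i, 0 < s i) :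
    ∑ i, s i * x i ^ 2 = 0 ↔ x = 0 := by
  rw [sum_eq_zero_iff_of_nonneg fun i _ => mul_nonneg (hs i).le (sq_nonneg _), funext_iff]
  simp [(hs _).ne']

section Quadratic

variable {Ω : Type*} [MeasurableSpace Ω] {P : Measure Ω} [IsProbabilityMeasure P] {f : Ω → ℝ}

lemma integrable_sub_mul_sq (hf : Integrable f P) (hf2 : Integrable (fun ω => f ω ^ 2) P)
    (c t : ℝ) : Integrable (fun ω => (c - t * f ω) ^ 2) P := by
  have h : (fun ω => (c - t * f ω) ^ 2) = fun ω => c ^ 2 - 2 * t * c * f ω + t ^ 2 * f ω ^ 2 := by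
    funext ω; ring
  rw [h]
  exact ((integrable_const _).sub (hf.const_mul _)).add (hf2.const_mul _)

lemma integral_sub_mul_sq (hf : Integrable f P) (hf2 : Integrable (fun ω => f ω ^ 2) P)
    (c t : ℝ) :
    ∫ ω, (c - t * f ω) ^ 2 ∂P
      = c ^ 2 - 2 * t * c * ∫ ω, f ω ∂P + t ^ 2 * ∫ ω, f ω ^ 2 ∂P := by
  have h : (fun ω => (c - t * f ω) ^ 2) = fun ω => c ^ 2 - 2 * t * c * f ω + t ^ 2 * f ω ^ 2 := by
    funext ω; ring
  have hlin : Integrable (fun ω => c ^ 2 - 2 * t * c * f ω) P :=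
    (integrable_const _).sub (hf.const_mul _)
  rw [h, integral_add hlin (hf2.const_mul _), integral_sub (integrable_const _) (hf.const_mul _),
    integral_const_mul, integral_const_mul, integral_const, probReal_univ, one_smul]

lemma integral_sub_mul_sq_sub_integral_sub_mul_sq (hf : Integrable f P)
    (hf2 : Integrable (fun ω => f ω ^ 2) P) (hs : ∫ ω, f ω ^ 2 ∂P ≠ 0) (c t : ℝ) :
    ∫ ω, (c - t * f ω) ^ 2 ∂P
        - ∫ ω, (c - (∫ ω, f ω * c ∂P) / (∫ ω, f ω ^ 2 ∂P) * f ω) ^ 2 ∂P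
      = (∫ ω, f ω ^ 2 ∂P) * (t - (∫ ω, f ω * c ∂P) / ∫ ω, f ω ^ 2 ∂P) ^ 2 := by
  rw [integral_sub_mul_sq hf hf2, integral_sub_mul_sq hf hf2, integral_mul_const]
  field_simp
  ring

end Quadratic

lemma enormEuclid_sub_diagonal_mulVec_sub_sq {d : ℕ} (w wstar t x : Fin d → ℝ) :
    enormEuclid (w - diagonal t *ᵥ x - wstar) ^ 2 = ∑ i, (w i - wstar i - t i * x i) ^ 2 := by
  rw [enormEuclid_sq]
  refine sum_congr rfl fun i _ => ?_
  simp only [Pi.sub_apply, mulVec_diagonal]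
  ring

lemma integral_enormEuclid_sub_diagonal_mulVec_sub_sq {d : ℕ} {Ω : Type*} [MeasurableSpace Ω]
    {P : Measure Ω} [IsProbabilityMeasure P] {g : Ω → Fin d → ℝ}
    (hg : ∀ i, Integrable (fun ω => g ω i) P)
    (hg2 : ∀ i, Integrable (fun ω => (g ω i) ^ 2) P) (w wstar t : Fin d → ℝ) :
    ∫ ω, enormEuclid (w - diagonal t *ᵥ g ω - wstar) ^ 2 ∂P
      = ∑ i, ∫ ω, (w i - wstar i - t i * g ω i) ^ 2 ∂P := by
  simp_rw [enormEuclid_sub_diagonal_mulVec_sub_sq]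
  exact integral_finsetSum _ fun i _ => integrable_sub_mul_sq (hg i) (hg2 i) _ _

/-- The ideal diagonal step-size: for a random gradient vector `g` with integrable components
and squares and `E[g(i)²] > 0`, the expected squared distance `E‖(w - D·g) - w*‖²` over
deterministic diagonal matrices `D` is minimized exactly when the `i`-th diagonal entry equals
`α(i) = E[g(i)·(w(i) - w*(i))] / E[g(i)²]` for every `i`. -/
theorem stmt_5 {d : ℕ} {Ω : Type*} [MeasurableSpace Ω] (P : Measure Ω)
    [IsProbabilityMeasure P] (g : Ω → Fin d → ℝ)
    (hint1 : ∀ i, Integrable (fun ω => g ω i) P)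
    (hint2 : ∀ i, Integrable (fun ω => (g ω i) ^ 2) P)
    (w wstar : Fin d → ℝ)
    (hpos : ∀ i, 0 < ∫ ω, (g ω i) ^ 2 ∂P)
    (α : Fin d → ℝ)
    (hα : ∀ i, α i = (∫ ω, g ω i * (w i - wstar i) ∂P) / ∫ ω, (g ω i) ^ 2 ∂P) :
    ∀ β : Fin d → ℝ,
      (∫ ω, enormEuclid ((w - (Matrix.diagonal α).mulVec (g ω)) - wstar) ^ 2 ∂P)
          ≤ (∫ ω, enormEuclid ((w - (Matrix.diagonal β).mulVec (g ω)) - wstar) ^ 2 ∂P)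
        ∧ ((∫ ω, enormEuclid ((w - (Matrix.diagonal β).mulVec (g ω)) - wstar) ^ 2 ∂P)
              = (∫ ω, enormEuclid ((w - (Matrix.diagonal α).mulVec (g ω)) - wstar) ^ 2 ∂P)
            ↔ β = α) := by
  intro β
  have excess :
      ∫ ω, enormEuclid (w - diagonal β *ᵥ g ω - wstar) ^ 2 ∂P
          - ∫ ω, enormEuclid (w - diagonal α *ᵥ g ω - wstar) ^ 2 ∂P
        = ∑ i, (∫ ω, g ω i ^ 2 ∂P) * (β - α) i ^ 2 := by
    rw [integral_enormEuclid_sub_diagonal_mulVec_sub_sq hint1 hint2,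
      integral_enormEuclid_sub_diagonal_mulVec_sub_sq hint1 hint2, ← sum_sub_distrib]
    refine sum_congr rfl fun i _ => ?_
    rw [Pi.sub_apply, hα i]
    exact integral_sub_mul_sq_sub_integral_sub_mul_sq (hint1 i) (hint2 i) (hpos i).ne' _ _
  have excess_nonneg : 0 ≤ ∑ i, (∫ ω, g ω i ^ 2 ∂P) * (β - α) i ^ 2 :=
    sum_nonneg fun i _ => mul_nonneg (hpos i).le (sq_nonneg _)
  refine ⟨by linarith, ?_⟩
  rw [← sub_eq_zero, excess, sum_mul_sq_eq_zero_iff hpos, sub_eq_zero]
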